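/- arXiv:2509.25993 — 2 statements merged into one kernel-verified Lean document; each statement's English description precedes it below -/
import Mathlib

section
/- Let α > 0 and m ∈ ℝ³. With respect to the ℓ∞ operator norm on 3×3 real matrices, |A|_∞ := max over rows i of Σⱼ |a_{ij}|, the inverse of α I₃ + M(m) satisfies |(α I₃ + M(m))⁻¹|_∞ ≤ 2/α. -/
open Matrix

/-- For `m = (m₁,m₂,m₃) ∈ ℝ³`, the matrix `M(m)` with rows `(0, −m₃, m₂)`,
`(m₃, 0, −m₁)`, `(−m₂, m₁, 0)`, so that `M(m) v = m × v`. -/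
noncomputable def crossMatrix (m : EuclideanSpace ℝ (Fin 3)) : Matrix (Fin 3) (Fin 3) ℝ :=
  !![0, -m 2, m 1; m 2, 0, -m 0; -m 1, m 0, 0]

/-- The `ℓ∞` operator norm `|A|_∞ = maxᵢ Σⱼ |a_{ij}|` of a `3×3` real matrix. -/
noncomputable def matNormInf (A : Matrix (Fin 3) (Fin 3) ℝ) : ℝ :=
  Finset.univ.sup' Finset.univ_nonempty fun i => ∑ j, |A i j|

/-! The adjugate of `α I₃ + M(m)` is `α² I₃ − α M(m) + m mᵀ` and its determinant is
`α (α² + ‖m‖²)`. By the triangle inequality and `2ab ≤ a² + b²`, every row of the adjugate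
has absolute sum at most `2 (α² + ‖m‖²)`; dividing by the determinant gives `2/α`. -/

lemma det_smul_one_add_crossMatrix (α : ℝ) (m : EuclideanSpace ℝ (Fin 3)) :
    (α • (1 : Matrix (Fin 3) (Fin 3) ℝ) + crossMatrix m).det = α * (α ^ 2 + ‖m‖ ^ 2) := by
  simp only [det_fin_three, one_fin_three, crossMatrix, EuclideanSpace.real_norm_sq_eq,
    Fin.sum_univ_three, Matrix.add_apply, Matrix.smul_apply, of_apply, cons_val', cons_val_zero,
    cons_val_one, cons_val, cons_val_fin_one]
  ring

lemma adjugate_smul_one_add_crossMatrix (α : ℝ) (m : EuclideanSpace ℝ (Fin 3)) :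
    (α • (1 : Matrix (Fin 3) (Fin 3) ℝ) + crossMatrix m).adjugate =
      α ^ 2 • 1 - α • crossMatrix m + vecMulVec m m := by
  ext i j
  fin_cases i <;> fin_cases j <;> simp [adjugate_fin_three, crossMatrix, vecMulVec] <;> ring

lemma matNormInf_le_iff {A : Matrix (Fin 3) (Fin 3) ℝ} {c : ℝ} :
    matNormInf A ≤ c ↔ ∀ i, ∑ j, |A i j| ≤ c := by
  simp [matNormInf]

lemma matNormInf_smul (c : ℝ) (A : Matrix (Fin 3) (Fin 3) ℝ) :
    matNormInf (c • A) = |c| * matNormInf A := by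
  simp only [matNormInf, Matrix.smul_apply, smul_eq_mul, abs_mul, ← Finset.mul_sum,
    Finset.mul₀_sup' (abs_nonneg c)]

-- Each row of `α² I₃ − α M(m) + m mᵀ`, after cyclically relabelling the coordinates.
lemma abs_row_le (α x y z : ℝ) :
    |α ^ 2 + x * x| + |α * z + x * y| + |-(α * y) + x * z| ≤
      2 * (α ^ 2 + (x ^ 2 + y ^ 2 + z ^ 2)) := by
  have hzy : |α * z + x * y| ≤ |α| * |z| + |x| * |y| := by
    simpa [abs_mul] using abs_add_le (α * z) (x * y)
  have hyz : |-(α * y) + x * z| ≤ |α| * |y| + |x| * |z| := by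
    simpa [abs_mul] using abs_add_le (-(α * y)) (x * z)
  rw [abs_of_nonneg (add_nonneg (sq_nonneg α) (mul_self_nonneg x))]
  nlinarith [sq_abs α, sq_abs x, sq_abs y, sq_abs z, sq_nonneg (|α| - |y|),
    sq_nonneg (|α| - |z|), sq_nonneg (|x| - |y|), sq_nonneg (|x| - |z|)]

lemma matNormInf_adjugate_smul_one_add_crossMatrix_le (α : ℝ) (m : EuclideanSpace ℝ (Fin 3)) :
    matNormInf (α • (1 : Matrix (Fin 3) (Fin 3) ℝ) + crossMatrix m).adjugate ≤
      2 * (α ^ 2 + ‖m‖ ^ 2) := by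
  rw [adjugate_smul_one_add_crossMatrix, matNormInf_le_iff, EuclideanSpace.real_norm_sq_eq,
    Fin.sum_univ_three]
  intro i
  have h₀ := abs_row_le α (m 0) (m 1) (m 2)
  have h₁ := abs_row_le α (m 1) (m 2) (m 0)
  have h₂ := abs_row_le α (m 2) (m 0) (m 1)
  fin_cases i <;> simp [Fin.sum_univ_three, crossMatrix, vecMulVec, one_apply] <;> linarith

/-- For `α > 0` and `m ∈ ℝ³`, the inverse of `α I₃ + M(m)` satisfies
`|(α I₃ + M(m))⁻¹|_∞ ≤ 2/α`. -/
theorem matNormInf_inv_le (α : ℝ) (hα : 0 < α) (m : EuclideanSpace ℝ (Fin 3)) :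
    matNormInf (α • (1 : Matrix (Fin 3) (Fin 3) ℝ) + crossMatrix m)⁻¹ ≤ 2 / α := by
  have hdet : 0 < α * (α ^ 2 + ‖m‖ ^ 2) := by positivity
  rw [inv_def, det_smul_one_add_crossMatrix, Ring.inverse_eq_inv', matNormInf_smul, abs_inv,
    abs_of_pos hdet, inv_mul_le_iff₀ hdet]
  calc _ ≤ 2 * (α ^ 2 + ‖m‖ ^ 2) := matNormInf_adjugate_smul_one_add_crossMatrix_le α m
    _ = α * (α ^ 2 + ‖m‖ ^ 2) * (2 / α) := by field_simp
end

section
/- Let X and Y be real Banach spaces with X reflexive, and let i : X → Y be an injective continuous linear map. Let T > 0 and let f : [0,T] → X be a function such that (i) there is M ≥ 0 with ‖f(t)‖_X ≤ M for all t ∈ [0,T], and (ii) the composition t ↦ i(f(t)) is weakly continuous into Y, i.e. for every continuous linear functional ℓ on Y the function t ↦ ℓ(i(f(t))) is continuous on [0,T]. Then f is weakly continuous into X: for every continuous linear functional φ on X, the function t ↦ φ(f(t)) is continuous on [0,T]. -/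
/-- Strauss lemma. Let `X`, `Y` be real Banach spaces with `X` reflexive
(i.e. the inclusion of `X` into its double dual is surjective), and let
`i : X → Y` be an injective continuous linear map. If `f : [0,T] → X` is
bounded in `X` and `i ∘ f` is weakly continuous into `Y`, then `f` is weakly
continuous into `X`. -/
theorem strauss_lemma {X Y : Type*}
    [NormedAddCommGroup X] [NormedSpace ℝ X] [CompleteSpace X]
    [NormedAddCommGroup Y] [NormedSpace ℝ Y] [CompleteSpace Y]
    (hrefl : Function.Surjective ⇑(NormedSpace.inclusionInDoubleDual ℝ X))
    (i : X →L[ℝ] Y) (hi : Function.Injective i)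
    (T : ℝ) (hT : 0 < T) (f : ℝ → X) (M : ℝ)
    (hbdd : ∀ t ∈ Set.Icc (0 : ℝ) T, ‖f t‖ ≤ M)
    (hweak : ∀ ℓ : Y →L[ℝ] ℝ, ContinuousOn (fun t => ℓ (i (f t))) (Set.Icc (0 : ℝ) T)) :
    ∀ φ : X →L[ℝ] ℝ, ContinuousOn (fun t => φ (f t)) (Set.Icc (0 : ℝ) T) := by
  -- The submodule of functionals of the form `ℓ ∘ i`.
  set S : Submodule ℝ (X →L[ℝ] ℝ) :=
    { carrier := Set.range (fun ℓ : Y →L[ℝ] ℝ => ℓ.comp i)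
      add_mem' := by rintro _ _ ⟨a, rfl⟩ ⟨b, rfl⟩; exact ⟨a + b, rfl⟩
      zero_mem' := ⟨0, rfl⟩
      smul_mem' := by rintro c _ ⟨a, rfl⟩; exact ⟨c • a, rfl⟩ } with hS
  -- Density of `S` in the dual of `X`.
  have hdense : ∀ φ : X →L[ℝ] ℝ, φ ∈ closure (S : Set (X →L[ℝ] ℝ)) := by
    intro φ
    by_contra hφ
    obtain ⟨F, u, hFS, hFφ⟩ :=
      geometric_hahn_banach_closed_point (S.convex.closure) isClosed_closure hφ
    have hu : 0 < u := by
      have := hFS 0 (subset_closure S.zero_mem)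
      simpa using this
    have hF0 : ∀ ψ ∈ S, F ψ = 0 := by
      intro ψ hψ
      by_contra hne
      have h1 : F (((u + 1) / F ψ) • ψ) < u :=
        hFS _ (subset_closure (S.smul_mem _ hψ))
      rw [map_smul, smul_eq_mul, div_mul_cancel₀ _ hne] at h1
      linarith
    obtain ⟨x, hx⟩ := hrefl F
    have hxval : ∀ ψ : X →L[ℝ] ℝ, ψ x = F ψ := by
      intro ψ
      have := congrArg (fun g : StrongDual ℝ (StrongDual ℝ X) => g ψ) hx
      simpa [NormedSpace.dual_def] using this
    have hix : i x = 0 := by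
      apply NormedSpace.eq_zero_of_forall_dual_eq_zero ℝ
      intro ℓ
      have : (ℓ.comp i) x = 0 := by
        rw [hxval]; exact hF0 _ ⟨ℓ, rfl⟩
      simpa using this
    have hx0 : x = 0 := hi (by simpa using hix)
    have : F φ = 0 := by rw [← hxval φ, hx0, map_zero]
    linarith
  -- Now the main argument.
  intro φ t₀ ht₀
  have hM : 0 ≤ M := le_trans (norm_nonneg _) (hbdd 0 ⟨le_refl 0, hT.le⟩)
  rw [Metric.continuousWithinAt_iff]
  intro ε hε
  have hε3 : 0 < ε / (3 * (M + 1)) := by positivity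
  obtain ⟨ψ, hψS, hψ⟩ := Metric.mem_closure_iff.mp (hdense φ) _ hε3
  obtain ⟨ℓ, rfl⟩ := hψS
  have hcont := (hweak ℓ t₀ ht₀)
  rw [Metric.continuousWithinAt_iff] at hcont
  obtain ⟨δ, hδ, hδ' ⟩ := hcont (ε / 3) (by positivity)
  refine ⟨δ, hδ, fun t ht hd => ?_⟩
  have key : ∀ s ∈ Set.Icc (0:ℝ) T, |φ (f s) - (ℓ.comp i) (f s)| ≤ ε / 3 := by
    intro s hs
    have h1 : |φ (f s) - (ℓ.comp i) (f s)| = |(φ - ℓ.comp i) (f s)| := by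
      simp [ContinuousLinearMap.sub_apply]
    rw [h1]
    calc |(φ - ℓ.comp i) (f s)| ≤ ‖φ - ℓ.comp i‖ * ‖f s‖ :=
          (φ - ℓ.comp i).le_opNorm _
      _ ≤ (ε / (3 * (M + 1))) * (M + 1) := by
          apply mul_le_mul (le_of_lt ?_) ?_ (norm_nonneg _) hε3.le
          · rw [← dist_eq_norm]; exact hψ
          · exact le_trans (hbdd s hs) (by linarith)
      _ = ε / 3 := by field_simp
  have h2 := hδ' ht hd
  rw [Real.dist_eq] at *
  have hA := key t ht
  have hB := key t₀ ht₀
  have : |φ (f t) - φ (f t₀)| ≤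
      |φ (f t) - (ℓ.comp i) (f t)| + |(ℓ.comp i) (f t) - (ℓ.comp i) (f t₀)|
        + |(ℓ.comp i) (f t₀) - φ (f t₀)| := by
    have := abs_sub_abs_le_abs_sub (φ (f t)) (φ (f t₀))
    calc |φ (f t) - φ (f t₀)|
        = |(φ (f t) - (ℓ.comp i) (f t)) + ((ℓ.comp i) (f t) - (ℓ.comp i) (f t₀))
            + ((ℓ.comp i) (f t₀) - φ (f t₀))| := by ring_nf
      _ ≤ _ := by
          refine le_trans (abs_add_le _ _) ?_
          gcongr
          exact abs_add_le _ _
  have hB' : |(ℓ.comp i) (f t₀) - φ (f t₀)| ≤ ε / 3 := by rw [abs_sub_comm]; exact hB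
  have h2' : |(ℓ.comp i) (f t) - (ℓ.comp i) (f t₀)| < ε / 3 := by
    simpa using h2
  linarith
end
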